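/- arXiv:1904.12514 — 3 statements merged into one kernel-verified Lean document; each statement's English description precedes it below -/
import Mathlib

section
/- Let (G,D,⋆) be a probabilistic metric space such that the triangle function ⋆ is sup-continuous. Let f : G → Δ⁺ be any map and A a nonempty subset of G. Then the map x ↦ sup_{y∈A} ( f(y) ⋆ D(x,y) ) is a probabilistic 1-Lipschitz map on G, and it dominates f on A. -/
open Filter Topology

noncomputable section

/-- `Δ⁺`: distribution functions `F : [-∞,∞] → [0,1]`, nondecreasing, left-continuous
on `ℝ`, with `F(-∞)=0`, `F(+∞)=1` and `F(0)=0`. -/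
def IsDistFun (F : EReal → ℝ) : Prop :=
  Monotone F ∧ (∀ t, F t ∈ Set.Icc (0:ℝ) 1) ∧
  (∀ x : ℝ, ContinuousWithinAt F (Set.Iio (x : EReal)) (x : EReal)) ∧
  F ⊥ = 0 ∧ F ⊤ = 1 ∧ F (0 : EReal) = 0

/-- The step function `H_a`. -/
def Hstep (a : ℝ) : EReal → ℝ := fun t => if t ≤ (a : EReal) then 0 else 1

/-- `H₀`. -/
def H0 : EReal → ℝ := Hstep 0

/-- `H_∞`. -/
def Hinf : EReal → ℝ := fun t => if t = ⊤ then 1 else 0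

/-- The condition `A(F,G;h)` : for all `t ∈ (0,1/h)`, `G(t) ≤ F(t+h)+h`. -/
def levyCond (F G : EReal → ℝ) (h : ℝ) : Prop :=
  ∀ t : ℝ, 0 < t → t < 1 / h → G (t : EReal) ≤ F ((t + h : ℝ) : EReal) + h

def levySet (F G : EReal → ℝ) : Set ℝ :=
  {h : ℝ | 0 < h ∧ h ≤ 1 ∧ levyCond F G h ∧ levyCond G F h}

/-- The modified Lévy distance. -/
def dL (F G : EReal → ℝ) : ℝ := sInf (levySet F G)

/-- Weak convergence: pointwise convergence at each (real) continuity point of the limit. -/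
def WeakConv (F : ℕ → EReal → ℝ) (G : EReal → ℝ) : Prop :=
  ∀ t : ℝ, ContinuousAt G (t : EReal) →
    Tendsto (fun n => F n (t : EReal)) atTop (𝓝 (G (t : EReal)))

abbrev TriOp := (EReal → ℝ) → (EReal → ℝ) → (EReal → ℝ)

/-- A triangle function on `Δ⁺`. -/
def IsTriangleFn (star : TriOp) : Prop :=
  (∀ F L, IsDistFun F → IsDistFun L → IsDistFun (star F L)) ∧
  (∀ F L, IsDistFun F → IsDistFun L → star F L = star L F) ∧
  (∀ F L K, IsDistFun F → IsDistFun L → IsDistFun K →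
    star F (star L K) = star (star F L) K) ∧
  (∀ F, IsDistFun F → star F H0 = F) ∧
  (∀ F L K, IsDistFun F → IsDistFun L → IsDistFun K → F ≤ L → star F K ≤ star L K)

/-- `⋆` is continuous with respect to weak convergence. -/
def StarContinuous (star : TriOp) : Prop :=
  ∀ (Fn Ln : ℕ → EReal → ℝ) (F L : EReal → ℝ),
    (∀ n, IsDistFun (Fn n)) → (∀ n, IsDistFun (Ln n)) →
    IsDistFun F → IsDistFun L →
    WeakConv Fn F → WeakConv Ln L →
    WeakConv (fun n => star (Fn n) (Ln n)) (star F L)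

/-- `⋆` is sup-continuous. -/
def StarSupContinuous (star : TriOp) : Prop :=
  ∀ (I : Type) (_ : Nonempty I) (F : I → EReal → ℝ) (L : EReal → ℝ),
    (∀ i, IsDistFun (F i)) → IsDistFun L →
    (fun t => ⨆ i, star (F i) L t) = star (fun t => ⨆ i, F i t) L

/-- A probabilistic metric space `(G, D, ⋆)`. -/
structure PMSpace (G : Type) where
  star : TriOp
  D : G → G → EReal → ℝ
  star_tri : IsTriangleFn star
  D_mem : ∀ p q, IsDistFun (D p q)
  D_eq_iff : ∀ p q, D p q = H0 ↔ p = q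
  D_symm : ∀ p q, D p q = D q p
  D_tri : ∀ p q r, star (D p q) (D q r) ≤ D p r

/-- Probabilistic 1-Lipschitz map. -/
def PLip {G : Type} (M : PMSpace G) (f : G → EReal → ℝ) : Prop :=
  (∀ x, IsDistFun (f x)) ∧ ∀ x y, M.star (M.D x y) (f y) ≤ f x

/-- Probabilistically continuous map. -/
def PCont {G : Type} (M : PMSpace G) (f : G → EReal → ℝ) : Prop :=
  (∀ x, IsDistFun (f x)) ∧
  ∀ (z : G) (zn : ℕ → G),
    WeakConv (fun n => M.D (zn n) z) H0 →
    WeakConv (fun n => f (zn n)) (f z)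

/-- The uniform modified Lévy distance `d_∞`. -/
def dInf {G : Type} (f g : G → EReal → ℝ) : ℝ := ⨆ x, dL (f x) (g x)

/-- Probabilistic Cauchy sequence: `D(z_n,z_p)(t) → H₀(t)` for all real `t`. -/
def PCauchy {G : Type} (M : PMSpace G) (z : ℕ → G) : Prop :=
  ∀ t : ℝ, Tendsto (fun np : ℕ × ℕ => M.D (z np.1) (z np.2) (t : EReal))
    atTop (𝓝 (H0 (t : EReal)))

def PConvTo {G : Type} (M : PMSpace G) (z : ℕ → G) (w : G) : Prop :=
  ∀ t : ℝ, Tendsto (fun n => M.D (z n) w (t : EReal)) atTop (𝓝 (H0 (t : EReal)))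

def PComplete {G : Type} (M : PMSpace G) : Prop :=
  ∀ z : ℕ → G, PCauchy M z → ∃ w, PConvTo M z w

/-- Compactness: complete and every strong `t`-neighborhood cover has a finite subcover. -/
def PCompact {G : Type} (M : PMSpace G) : Prop :=
  PComplete M ∧ ∀ t : ℝ, 0 < t → ∃ A : Finset G, ∀ x : G, ∃ a ∈ A, M.D a x (t : EReal) > 1 - t

/-
Each `y ∈ A` contributes the map `x ↦ f y ⋆ D(x, y)`, which is probabilistic 1-Lipschitz by
associativity and commutativity of `⋆` and the triangle inequality for `D`. Sup-continuity lets
`⋆ D(x, y)` pass through the supremum over `A`, so the supremum is 1-Lipschitz as well, and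
`D(x, x) = H₀`, the unit of `⋆`, gives domination on `A`.
-/

theorem Monotone.continuousWithinAt_Iio_iff_lowerSemicontinuousWithinAt
    {α β : Type*} [Preorder α] [TopologicalSpace α] [LinearOrder β] [TopologicalSpace β]
    [OrderTopology β] {f : α → β} (hf : Monotone f) (x : α) :
    ContinuousWithinAt f (Set.Iio x) x ↔ LowerSemicontinuousWithinAt f (Set.Iio x) x := by
  rw [continuousWithinAt_iff_lower_upperSemicontinuousWithinAt, and_iff_left_iff_imp]
  intro _ y hy
  filter_upwards [self_mem_nhdsWithin] with s hs using (hf hs.le).trans_lt hy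

namespace IsDistFun

variable {F : EReal → ℝ}

theorem monotone (hF : IsDistFun F) : Monotone F := hF.1

theorem nonneg (hF : IsDistFun F) (t : EReal) : 0 ≤ F t := (hF.2.1 t).1

theorem le_one (hF : IsDistFun F) (t : EReal) : F t ≤ 1 := (hF.2.1 t).2

theorem continuousWithinAt_Iio (hF : IsDistFun F) (x : ℝ) :
    ContinuousWithinAt F (Set.Iio (x : EReal)) (x : EReal) := hF.2.2.1 x

theorem apply_bot (hF : IsDistFun F) : F ⊥ = 0 := hF.2.2.2.1

theorem apply_top (hF : IsDistFun F) : F ⊤ = 1 := hF.2.2.2.2.1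

theorem apply_zero (hF : IsDistFun F) : F 0 = 0 := hF.2.2.2.2.2

theorem bddAbove_range {I : Type*} {F : I → EReal → ℝ} (hF : ∀ i, IsDistFun (F i))
    (t : EReal) : BddAbove (Set.range fun i => F i t) :=
  ⟨1, by rintro _ ⟨i, rfl⟩; exact (hF i).le_one t⟩

theorem iSup {I : Type*} [Nonempty I] {F : I → EReal → ℝ} (hF : ∀ i, IsDistFun (F i)) :
    IsDistFun fun t => ⨆ i, F i t := by
  have hmono : Monotone fun t => ⨆ i, F i t := fun s t hst =>
    ciSup_mono (bddAbove_range hF t) fun i => (hF i).monotone hst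
  refine ⟨hmono, fun t => ⟨?_, ciSup_le fun i => (hF i).le_one t⟩, fun x => ?_, ?_, ?_, ?_⟩
  · obtain ⟨i⟩ := ‹Nonempty I›
    exact ((hF i).nonneg t).trans (le_ciSup (bddAbove_range hF t) i)
  · -- For monotone functions left continuity is lower semicontinuity, which passes to suprema.
    rw [hmono.continuousWithinAt_Iio_iff_lowerSemicontinuousWithinAt]
    exact lowerSemicontinuousWithinAt_ciSup (Eventually.of_forall (bddAbove_range hF)) fun i =>
      ((hF i).monotone.continuousWithinAt_Iio_iff_lowerSemicontinuousWithinAt _).1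
        ((hF i).continuousWithinAt_Iio x)
  · simp only [fun i => (hF i).apply_bot, ciSup_const]
  · simp only [fun i => (hF i).apply_top, ciSup_const]
  · simp only [fun i => (hF i).apply_zero, ciSup_const]

end IsDistFun

namespace IsTriangleFn

variable {star : TriOp} {F L K : EReal → ℝ}

theorem isDistFun (h : IsTriangleFn star) (hF : IsDistFun F) (hL : IsDistFun L) :
    IsDistFun (star F L) := h.1 F L hF hL

theorem comm (h : IsTriangleFn star) (hF : IsDistFun F) (hL : IsDistFun L) :
    star F L = star L F := h.2.1 F L hF hL

theorem assoc (h : IsTriangleFn star) (hF : IsDistFun F) (hL : IsDistFun L) (hK : IsDistFun K) :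
    star F (star L K) = star (star F L) K := h.2.2.1 F L K hF hL hK

theorem star_H0 (h : IsTriangleFn star) (hF : IsDistFun F) : star F H0 = F := h.2.2.2.1 F hF

theorem mono (h : IsTriangleFn star) (hF : IsDistFun F) (hL : IsDistFun L) (hK : IsDistFun K)
    (hFL : F ≤ L) : star F K ≤ star L K := h.2.2.2.2 F L K hF hL hK hFL

end IsTriangleFn

namespace PMSpace

variable {G : Type} (M : PMSpace G)

theorem star_D_self {F : EReal → ℝ} (hF : IsDistFun F) (x : G) : M.star F (M.D x x) = F := by
  rw [(M.D_eq_iff x x).2 rfl, M.star_tri.star_H0 hF]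

theorem star_star_D_le {F : EReal → ℝ} (hF : IsDistFun F) (x y z : G) :
    M.star (M.star F (M.D y z)) (M.D x y) ≤ M.star F (M.D x z) := by
  have hDx := M.D_mem x y
  have hDy := M.D_mem y z
  calc M.star (M.star F (M.D y z)) (M.D x y)
      = M.star (M.star (M.D x y) (M.D y z)) F := by
        rw [← M.star_tri.assoc hF hDy hDx, M.star_tri.comm hDy hDx,
          M.star_tri.comm hF (M.star_tri.isDistFun hDx hDy)]
    _ ≤ M.star (M.D x z) F :=
        M.star_tri.mono (M.star_tri.isDistFun hDx hDy) (M.D_mem x z) hF (M.D_tri x y z)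
    _ = M.star F (M.D x z) := M.star_tri.comm (M.D_mem x z) hF

/-- The probabilistic analogue of McShane's extension `x ↦ sup_{y ∈ A} (f y - d(x, y))`. -/
def mcShane (f : G → EReal → ℝ) (A : Set G) : G → EReal → ℝ :=
  fun x t => ⨆ y : A, M.star (f y) (M.D x y) t

variable {M} {f : G → EReal → ℝ} {A : Set G}

theorem star_D_le_mcShane (hf : ∀ y ∈ A, IsDistFun (f y)) (x : G) (y : A) :
    M.star (f y) (M.D x y) ≤ M.mcShane f A x := fun t =>
  le_ciSup (IsDistFun.bddAbove_range
    (fun z : A => M.star_tri.isDistFun (hf z z.2) (M.D_mem x z)) t) y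

theorem isDistFun_mcShane [Nonempty A] (hf : ∀ y ∈ A, IsDistFun (f y)) (x : G) :
    IsDistFun (M.mcShane f A x) :=
  IsDistFun.iSup fun y : A => M.star_tri.isDistFun (hf y y.2) (M.D_mem x y)

theorem le_mcShane (hf : ∀ y ∈ A, IsDistFun (f y)) {x : G} (hx : x ∈ A) :
    f x ≤ M.mcShane f A x := by
  simpa only [M.star_D_self (hf x hx)] using star_D_le_mcShane (M := M) hf x ⟨x, hx⟩

theorem pLip_mcShane (hsup : StarSupContinuous M.star) [Nonempty A]
    (hf : ∀ y ∈ A, IsDistFun (f y)) : PLip M (M.mcShane f A) := by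
  refine ⟨isDistFun_mcShane hf, fun x y => ?_⟩
  have hsup_y : M.star (M.mcShane f A y) (M.D x y) =
      fun t => ⨆ z : A, M.star (M.star (f z) (M.D y z)) (M.D x y) t :=
    (hsup A inferInstance _ _ (fun z => M.star_tri.isDistFun (hf z z.2) (M.D_mem y z))
      (M.D_mem x y)).symm
  rw [M.star_tri.comm (M.D_mem x y) (isDistFun_mcShane hf y), hsup_y]
  exact fun t => ciSup_le fun z =>
    (M.star_star_D_le (hf z z.2) x y z t).trans (star_D_le_mcShane hf x z t)

end PMSpace

/-- For `⋆` sup-continuous, `x ↦ sup_{y ∈ A} (f(y) ⋆ D(x,y))` is probabilistic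
1-Lipschitz and dominates `f` on `A`. -/
theorem stmt9 {G : Type} (M : PMSpace G) (hsup : StarSupContinuous M.star)
    (f : G → EReal → ℝ) (hf : ∀ x, IsDistFun (f x)) (A : Set G) (hA : A.Nonempty) :
    PLip M (fun x t => ⨆ y : A, M.star (f y) (M.D x y) t) ∧
    (∀ x ∈ A, f x ≤ fun t => ⨆ y : A, M.star (f y) (M.D x y) t) := by
  have : Nonempty A := hA.to_subtype
  exact ⟨M.pLip_mcShane hsup fun y _ => hf y,
    fun x hx => PMSpace.le_mcShane (fun y _ => hf y) hx⟩
end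
end

section
/- Let ⋆ be a continuous triangle function on Δ⁺. Then for any F, G ∈ Δ⁺ and x, y in a probabilistic metric space (G,D,⋆) and any probabilistic 1-Lipschitz map f, one has d_L(f(x), f(y)) ≤ max( d_L(D(x,y) ⋆ f(x), f(x)), d_L(D(x,y) ⋆ f(y), f(y)) ). -/
open Filter Topology

noncomputable section

/-!
Both inequalities `D(x,y) ⋆ f(y) ≤ f(x)` and `D(x,y) ⋆ f(x) ≤ f(y)` come from the Lipschitz
condition. The Lévy condition `A(F,G;h)` only gets weaker when `F` grows or, for monotone `F`,
when `h` grows; so if `h₁` is admissible for `(D(x,y) ⋆ f(x), f(x))` and `h₂` for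
`(D(x,y) ⋆ f(y), f(y))`, then `max h₁ h₂` is admissible for `(f(x), f(y))`.
-/

lemma levyCond_mono {F G : EReal → ℝ} (hF : Monotone F) {h h' : ℝ} (hh : 0 < h)
    (hle : h ≤ h') (hc : levyCond F G h) : levyCond F G h' := by
  intro t ht ht'
  have ht_lt : t < 1 / h := ht'.trans_le (one_div_le_one_div_of_le hh hle)
  calc G t ≤ F ((t + h : ℝ) : EReal) + h := hc t ht ht_lt
    _ ≤ F ((t + h' : ℝ) : EReal) + h' :=
        add_le_add (hF (EReal.coe_le_coe_iff.mpr (by linarith))) hle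

lemma levyCond_of_le_left {F F' G : EReal → ℝ} (hFF : F ≤ F') {h : ℝ}
    (hc : levyCond F G h) : levyCond F' G h :=
  fun t ht ht' => (hc t ht ht').trans (add_le_add_left (hFF _) h)

lemma one_mem_levySet {F G : EReal → ℝ} (hF : ∀ t, F t ∈ Set.Icc (0 : ℝ) 1)
    (hG : ∀ t, G t ∈ Set.Icc (0 : ℝ) 1) : (1 : ℝ) ∈ levySet F G := by
  refine ⟨one_pos, le_rfl, fun t _ _ => ?_, fun t _ _ => ?_⟩
  · linarith [(hG t).2, (hF ((t + 1 : ℝ) : EReal)).1]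
  · linarith [(hF t).2, (hG ((t + 1 : ℝ) : EReal)).1]

lemma levySet_bddBelow (F G : EReal → ℝ) : BddBelow (levySet F G) :=
  ⟨0, fun _ hh => hh.1.le⟩

lemma max_mem_levySet {A B F G : EReal → ℝ} (hA : Monotone A) (hB : Monotone B)
    (hAG : A ≤ G) (hBF : B ≤ F) {h₁ h₂ : ℝ} (h₁_mem : h₁ ∈ levySet A F)
    (h₂_mem : h₂ ∈ levySet B G) : max h₁ h₂ ∈ levySet F G :=
  ⟨lt_max_of_lt_left h₁_mem.1, max_le h₁_mem.2.1 h₂_mem.2.1,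
    levyCond_of_le_left hBF (levyCond_mono hB h₂_mem.1 (le_max_right _ _) h₂_mem.2.2.1),
    levyCond_of_le_left hAG (levyCond_mono hA h₁_mem.1 (le_max_left _ _) h₁_mem.2.2.1)⟩

lemma Real.sInf_le_max_sInf {S T U : Set ℝ} (hS : S.Nonempty) (hT : T.Nonempty)
    (hU : BddBelow U) (hmax : ∀ s ∈ S, ∀ t ∈ T, max s t ∈ U) :
    sInf U ≤ max (sInf S) (sInf T) := by
  refine le_of_forall_pos_le_add fun ε hε => ?_
  obtain ⟨s, hs, hs_lt⟩ := Real.lt_sInf_add_pos hS hε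
  obtain ⟨t, ht, ht_lt⟩ := Real.lt_sInf_add_pos hT hε
  calc sInf U ≤ max s t := csInf_le hU (hmax s hs t ht)
    _ ≤ max (sInf S + ε) (sInf T + ε) := max_le_max hs_lt.le ht_lt.le
    _ = max (sInf S) (sInf T) + ε := max_add_add_right _ _ _

lemma dL_le_max_of_le {A B F G : EReal → ℝ} (hA : IsDistFun A) (hB : IsDistFun B)
    (hF : IsDistFun F) (hG : IsDistFun G) (hAG : A ≤ G) (hBF : B ≤ F) :
    dL F G ≤ max (dL A F) (dL B G) :=
  Real.sInf_le_max_sInf ⟨1, one_mem_levySet hA.2.1 hF.2.1⟩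
    ⟨1, one_mem_levySet hB.2.1 hG.2.1⟩ (levySet_bddBelow F G)
    fun _ h₁_mem _ h₂_mem => max_mem_levySet hA.1 hB.1 hAG hBF h₁_mem h₂_mem

theorem stmt13_general {G : Type} (M : PMSpace G)
    (f : G → EReal → ℝ) (hf : PLip M f) (x y : G) :
    dL (f x) (f y) ≤
      max (dL (M.star (M.D x y) (f x)) (f x)) (dL (M.star (M.D x y) (f y)) (f y)) := by
  have hfx := hf.1 x
  have hfy := hf.1 y
  have h_lip_x : M.star (M.D x y) (f y) ≤ f x := hf.2 x y
  have h_lip_y : M.star (M.D x y) (f x) ≤ f y := M.D_symm x y ▸ hf.2 y x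
  have hDx := M.star_tri.1 _ _ (M.D_mem x y) hfx
  have hDy := M.star_tri.1 _ _ (M.D_mem x y) hfy
  exact dL_le_max_of_le hDx hDy hfx hfy h_lip_y h_lip_x

/-- Key inequality: `d_L(f(x),f(y)) ≤ max(d_L(D(x,y)⋆f(x), f(x)), d_L(D(x,y)⋆f(y), f(y)))`
for a probabilistic 1-Lipschitz map `f`. -/
theorem stmt13 {G : Type} (M : PMSpace G) (hc : StarContinuous M.star)
    (f : G → EReal → ℝ) (hf : PLip M f) (x y : G) :
    dL (f x) (f y) ≤
      max (dL (M.star (M.D x y) (f x)) (f x)) (dL (M.star (M.D x y) (f y)) (f y)) :=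
  stmt13_general M f hf x y
end
end

section
/- Let (G,D,⋆) be a probabilistic metric space with ⋆ continuous. Then the family Lip¹_⋆(G,Δ⁺) of all probabilistic 1-Lipschitz maps is uniformly equicontinuous: for all ε > 0 there exists η > 0 such that for every probabilistic 1-Lipschitz f and all x, y ∈ G, d_L(D(x,y), H₀) < η implies d_L(f(x), f(y)) < ε. -/
open Filter Topology

noncomputable section

/-!
If `d_L(D(x,y), H₀)` is small, then `D(x,y)` dominates a step function `K` close to `H₀`, and
the Lipschitz condition gives `K ⋆ f(y) ≤ D(x,y) ⋆ f(y) ≤ f(x)`. It therefore suffices to have,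
for `K` close enough to `H₀`, `L(t) ≤ (K ⋆ L)(t + ε) + ε` uniformly in `L ∈ Δ⁺`. Continuity of `⋆`
gives this for each of the finitely many step functions on an `ε/2`-grid, and every `L` dominates
a grid step function that is `ε/2`-close to it at `t`, which transfers the estimate to all of `Δ⁺`.
-/

/-- The distribution of mass `a` at `c` and `1 - a` at `∞`. -/
def stepFun (c a : ℝ) : EReal → ℝ := fun s => if s ≤ (c : EReal) then 0 else if s = ⊤ then 1 else a

section StepFun

variable {c a : ℝ}

lemma stepFun_of_le {s : EReal} (h : s ≤ (c : EReal)) : stepFun c a s = 0 := by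
  simp [stepFun, h]

lemma stepFun_coe_of_lt {t : ℝ} (h : c < t) : stepFun c a (t : EReal) = a := by
  simp [stepFun, h, EReal.coe_ne_top]

lemma stepFun_mono (ha₀ : 0 ≤ a) (ha₁ : a ≤ 1) : Monotone (stepFun c a) := by
  intro s u hsu
  unfold stepFun
  split_ifs <;> first | rfl | linarith | order

lemma continuousAt_stepFun {x : ℝ} (hx : c < x) : ContinuousAt (stepFun c a) (x : EReal) := by
  have hIoo : Set.Ioo (c : EReal) ⊤ ∈ 𝓝 (x : EReal) :=
    isOpen_Ioo.mem_nhds ⟨by exact_mod_cast hx, EReal.coe_lt_top x⟩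
  refine tendsto_const_nhds.congr' (eventually_of_mem hIoo fun s hs => ?_)
  simp [stepFun, not_le.mpr hs.1, hs.2.ne, not_le.mpr hx]

lemma isDistFun_stepFun (hc : 0 ≤ c) (ha₀ : 0 ≤ a) (ha₁ : a ≤ 1) : IsDistFun (stepFun c a) := by
  refine ⟨stepFun_mono ha₀ ha₁, fun t => ?_, fun x => ?_, stepFun_of_le bot_le, by simp [stepFun],
    stepFun_of_le (by exact_mod_cast hc)⟩
  · unfold stepFun
    split_ifs <;> simp [ha₀, ha₁]
  · rcases le_or_gt x c with hx | hx
    · refine tendsto_const_nhds.congr' (eventually_of_mem self_mem_nhdsWithin fun s hs => ?_)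
      have hxc : (x : EReal) ≤ c := by exact_mod_cast hx
      rw [stepFun_of_le hxc, stepFun_of_le ((le_of_lt hs).trans hxc)]
    · exact (continuousAt_stepFun hx).continuousWithinAt

lemma stepFun_le {L : EReal → ℝ} (hL : IsDistFun L) {t : ℝ} (htc : t ≤ c) (ha : a ≤ L t) :
    stepFun c a ≤ L := by
  intro s
  unfold stepFun
  split_ifs with hs hs'
  · exact (hL.2.1 s).1
  · rw [hs', hL.2.2.2.2.1]
  · exact ha.trans (hL.1 ((EReal.coe_le_coe_iff.mpr htc).trans (not_le.mp hs).le))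

end StepFun

lemma H0_eq_stepFun : H0 = stepFun 0 1 := by
  funext s
  by_cases hs : s ≤ 0 <;> simp [H0, Hstep, stepFun, hs]

lemma isDistFun_H0 : IsDistFun H0 :=
  H0_eq_stepFun ▸ isDistFun_stepFun le_rfl zero_le_one le_rfl

lemma H0_coe_of_pos {t : ℝ} (ht : 0 < t) : H0 t = 1 := by
  rw [H0_eq_stepFun, stepFun_coe_of_lt ht]

lemma H0_coe_of_nonpos {t : ℝ} (ht : t ≤ 0) : H0 t = 0 := by
  rw [H0_eq_stepFun, stepFun_of_le (by exact_mod_cast ht)]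

lemma one_mem_levySet_s14 {F L : EReal → ℝ} (hF : IsDistFun F) (hL : IsDistFun L) :
    (1 : ℝ) ∈ levySet F L := by
  refine ⟨one_pos, le_rfl, ?_, ?_⟩ <;> intro t _ _
  · linarith [(hL.2.1 t).2, (hF.2.1 ((t + 1 : ℝ) : EReal)).1]
  · linarith [(hF.2.1 t).2, (hL.2.1 ((t + 1 : ℝ) : EReal)).1]

lemma dL_lt_of_mem_levySet {F L : EReal → ℝ} {h ε : ℝ} (hh : h ∈ levySet F L) (hε : h < ε) :
    dL F L < ε :=
  (csInf_le ⟨0, fun _ hh' => hh'.1.le⟩ hh).trans_lt hε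

lemma levyCond.mono_left {F F' G : EReal → ℝ} {h : ℝ} (hFG : levyCond F G h) (hF : F ≤ F') :
    levyCond F' G h := fun t ht₀ ht₁ =>
  (hFG t ht₀ ht₁).trans (by linarith [hF ((t + h : ℝ) : EReal)])

lemma one_sub_le_of_levyCond_H0 {F : EReal → ℝ} (hF : Monotone F) {h s : ℝ} (hh : 0 < h)
    (hF0 : levyCond F H0 h) (hs : h < s) : 1 - h ≤ F s := by
  set t := min (s - h) (1 / (2 * h))
  have ht₀ : 0 < t := lt_min (by linarith) (by positivity)
  have ht₁ : t < 1 / h :=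
    (min_le_right _ _).trans_lt (one_div_lt_one_div_of_lt hh (by linarith))
  have hts : ((t + h : ℝ) : EReal) ≤ s :=
    EReal.coe_le_coe_iff.mpr (by linarith [min_le_left (s - h) (1 / (2 * h))])
  have := hF0 t ht₀ ht₁
  rw [H0_coe_of_pos ht₀] at this
  linarith [hF hts]

def approxH0 (n : ℕ) : EReal → ℝ := stepFun (1 / (n + 1)) (1 - 1 / (n + 1))

lemma isDistFun_approxH0 (n : ℕ) : IsDistFun (approxH0 n) := by
  have h₀ : (0 : ℝ) < 1 / (n + 1) := by positivity
  have h₁ : (1 : ℝ) / (n + 1) ≤ 1 := div_le_one_of_le₀ (by simp) (by positivity)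
  exact isDistFun_stepFun h₀.le (by linarith) (by linarith)

lemma weakConv_approxH0 : WeakConv approxH0 H0 := by
  intro t _
  rcases le_or_gt t 0 with ht | ht
  · rw [H0_coe_of_nonpos ht]
    refine tendsto_const_nhds.congr fun n => (stepFun_of_le ?_).symm
    exact_mod_cast ht.trans (by positivity)
  · rw [H0_coe_of_pos ht]
    have hlim := tendsto_one_div_add_atTop_nhds_zero_nat (𝕜 := ℝ)
    have hev : ∀ᶠ n : ℕ in atTop, 1 - 1 / ((n : ℝ) + 1) = approxH0 n t :=
      (hlim.eventually (gt_mem_nhds ht)).mono fun n hn => (stepFun_coe_of_lt hn).symm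
    simpa using (tendsto_const_nhds.sub hlim).congr' hev

lemma approxH0_le_of_dL_lt {F : EReal → ℝ} (hF : IsDistFun F) {n : ℕ}
    (hFn : dL F H0 < 1 / (n + 1)) : approxH0 n ≤ F := by
  obtain ⟨h, ⟨hh₀, -, hFH, -⟩, hhn⟩ :=
    exists_lt_of_csInf_lt ⟨1, one_mem_levySet_s14 hF isDistFun_H0⟩ hFn
  exact stepFun_le hF le_rfl (by linarith [one_sub_le_of_levyCond_H0 hF.1 hh₀ hFH hhn])

lemma floor_div_mul_le_and_lt {δ x : ℝ} (hδ : 0 < δ) (hx : 0 ≤ x) :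
    ⌊x / δ⌋₊ * δ ≤ x ∧ x < (⌊x / δ⌋₊ + 1) * δ :=
  ⟨(le_div_iff₀ hδ).mp (Nat.floor_le (div_nonneg hx hδ.le)),
    (div_lt_iff₀ hδ).mp (Nat.lt_floor_add_one _)⟩

namespace IsTriangleFn

variable {star : TriOp} (htri : IsTriangleFn star)
include htri

lemma mono_left {F F' L : EReal → ℝ} (hF : IsDistFun F) (hF' : IsDistFun F') (hL : IsDistFun L)
    (h : F ≤ F') : star F L ≤ star F' L :=
  htri.2.2.2.2 F F' L hF hF' hL h

lemma mono_right {F L L' : EReal → ℝ} (hF : IsDistFun F) (hL : IsDistFun L) (hL' : IsDistFun L')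
    (h : L ≤ L') : star F L ≤ star F L' := by
  rw [htri.2.1 F L hF hL, htri.2.1 F L' hF hL']
  exact htri.mono_left hL hL' hF h

lemma H0_star {L : EReal → ℝ} (hL : IsDistFun L) : star H0 L = L := by
  rw [htri.2.1 H0 L isDistFun_H0 hL, htri.2.2.2.1 L hL]

variable (hc : StarContinuous star) {K : ℕ → EReal → ℝ} (hK : ∀ n, IsDistFun (K n))
  (hKH : WeakConv K H0)
include hc hK hKH

lemma eventually_lt_star {S : EReal → ℝ} (hS : IsDistFun S) {x : ℝ}
    (hx : ContinuousAt S (x : EReal)) {a : ℝ} (ha : a < S x) :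
    ∀ᶠ n in atTop, a < star (K n) S x := by
  have hconv := hc K (fun _ => S) H0 S hK (fun _ => hS) isDistFun_H0 hS hKH
    (fun _ _ => tendsto_const_nhds)
  rw [htri.H0_star hS] at hconv
  exact (hconv x hx).eventually (eventually_gt_nhds ha)

lemma exists_levyCond_star {ε : ℝ} (hε : 0 < ε) :
    ∃ n, ∀ L, IsDistFun L → levyCond (star (K n) L) L ε := by
  set δ := ε / 2 with hδε
  have hδ : 0 < δ := by positivity
  set S : ℕ → ℕ → EReal → ℝ := fun i j => stepFun ((i + 1) * δ) (j * δ)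
  have hS : ∀ i j : ℕ, j ≤ ⌊1 / δ⌋₊ → IsDistFun (S i j) := fun i j hj =>
    isDistFun_stepFun (by positivity) (by positivity) <| by
      have := (Nat.cast_le.mpr hj).trans (Nat.floor_le (by positivity) : (⌊1 / δ⌋₊ : ℝ) ≤ 1 / δ)
      rwa [le_div_iff₀ hδ] at this
  -- the grid is finite because only `t < 1 / ε` matters and `L t ≤ 1`
  have grid : ∀ᶠ n in atTop, ∀ i ∈ Finset.Iic ⌊1 / ε / δ⌋₊, ∀ j ∈ Finset.Iic ⌊1 / δ⌋₊,
      j * δ - δ < star (K n) (S i j) ((i * δ + ε : ℝ) : EReal) := by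
    simp only [eventually_all_finset]
    intro i _ j hj
    have hx : (i + 1) * δ < i * δ + ε := by linarith
    refine htri.eventually_lt_star hc hK hKH (hS i j (Finset.mem_Iic.mp hj))
      (continuousAt_stepFun hx) ?_
    simp only [S, stepFun_coe_of_lt hx]
    linarith
  obtain ⟨n, hn⟩ := grid.exists
  refine ⟨n, fun L hL t ht₀ ht₁ => le_of_lt ?_⟩
  obtain ⟨hLt₀, hLt₁⟩ := hL.2.1 t
  obtain ⟨hi_le, hi_lt⟩ := floor_div_mul_le_and_lt hδ ht₀.le
  obtain ⟨hj_le, hj_lt⟩ := floor_div_mul_le_and_lt hδ hLt₀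
  set i := ⌊t / δ⌋₊
  set j := ⌊L t / δ⌋₊
  have hi : i ≤ ⌊1 / ε / δ⌋₊ := Nat.floor_le_floor (by gcongr)
  have hj : j ≤ ⌊1 / δ⌋₊ := Nat.floor_le_floor (by gcongr)
  have hSij : IsDistFun (S i j) := hS i j hj
  have hSL : S i j ≤ L := stepFun_le hL hi_lt.le hj_le
  calc L t < j * δ - δ + ε := by linarith
    _ < star (K n) (S i j) ((i * δ + ε : ℝ) : EReal) + ε := by
      gcongr
      exact hn i (Finset.mem_Iic.mpr hi) j (Finset.mem_Iic.mpr hj)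
    _ ≤ star (K n) (S i j) ((t + ε : ℝ) : EReal) + ε := by
      gcongr
      exact (htri.1 _ _ (hK n) hSij).1 (by exact_mod_cast (by linarith : i * δ + ε ≤ t + ε))
    _ ≤ star (K n) L ((t + ε : ℝ) : EReal) + ε := by
      gcongr
      exact htri.mono_right (hK n) hSij hL hSL _

end IsTriangleFn

/-- `Lip¹_⋆(G,Δ⁺)` is uniformly equicontinuous when `⋆` is continuous. -/
theorem stmt14 {G : Type} (M : PMSpace G) (hc : StarContinuous M.star) :
    ∀ ε > (0:ℝ), ∃ η > (0:ℝ), ∀ f : G → EReal → ℝ, PLip M f → ∀ x y : G,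
      dL (M.D x y) H0 < η → dL (f x) (f y) < ε := by
  intro ε hε
  obtain ⟨ε', hε'₀, hε'₁, hε'ε⟩ : ∃ ε', 0 < ε' ∧ ε' ≤ 1 ∧ ε' < ε :=
    ⟨min ε 1 / 2, by positivity, by linarith [min_le_right ε 1],
      by linarith [min_le_left ε 1, lt_min hε one_pos]⟩
  obtain ⟨n, hn⟩ :=
    M.star_tri.exists_levyCond_star hc isDistFun_approxH0 weakConv_approxH0 hε'₀
  refine ⟨1 / (n + 1), by positivity, fun f hf x y hxy => ?_⟩
  have hcond : ∀ u v, dL (M.D u v) H0 < 1 / (n + 1) → levyCond (f u) (f v) ε' := fun u v huv =>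
    (hn (f v) (hf.1 v)).mono_left <| (M.star_tri.mono_left (isDistFun_approxH0 n)
      (M.D_mem u v) (hf.1 v) (approxH0_le_of_dL_lt (M.D_mem u v) huv)).trans (hf.2 u v)
  exact dL_lt_of_mem_levySet ⟨hε'₀, hε'₁, hcond x y hxy, hcond y x (M.D_symm y x ▸ hxy)⟩ hε'ε
end
end
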